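/- arXiv:1505.00355 — 2 statements merged into one kernel-verified Lean document; each statement's English description precedes it below -/
import Mathlib

section
/- For every positive integer a, the sequence \left\{ \frac{1}{(k+a)\, k!} \right\}_{k=0}^{\infty} is a multiplier sequence. -/
/-- The polynomial obtained by applying the sequence `γ` coefficientwise:
`T[∑ aₖ xᵏ] = ∑ γₖ aₖ xᵏ`. -/
noncomputable def applySeq (γ : ℕ → ℝ) (p : Polynomial ℝ) : Polynomial ℝ :=
  ∑ k ∈ Finset.range (p.natDegree + 1), Polynomial.C (γ k * p.coeff k) * Polynomial.X ^ k

/-- A real polynomial has only real roots (over `ℂ`). -/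
def RealRooted (p : Polynomial ℝ) : Prop :=
  ∀ z : ℂ, Polynomial.aeval z p = 0 → z.im = 0

/-- A classical multiplier sequence. -/
def IsMultiplierSequence (γ : ℕ → ℝ) : Prop :=
  ∀ p : Polynomial ℝ, RealRooted p → RealRooted (applySeq γ p)

/-!
Since `1 / ((k + a) k!) = (k + 1) (k + 2) ⋯ (k + a - 1) / (k + a)!` and multiplier sequences are
closed under termwise products, it suffices to treat the two factors.

For a positive integer `c`, `k ↦ k + c` is a multiplier sequence because
`∑ (k + c) aₖ xᵏ = x p' + c p = x^{1-c} (x^c p)'` and derivatives of real-rooted polynomials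
are real-rooted (Rolle).

For `k ↦ 1 / (k + a)!` we use the Hermite–Poulain theorem: if `q` splits over `ℝ`, then
`q(D)` preserves real-rootedness, since each factor `D + r` does (Rolle applied to `e^{rx} f`).
If `p = ∑ aₖ xᵏ` has degree `n`, its reversal `q = ∑ aₖ x^{n-k}` is real-rooted, and
`q(D) x^{n+a} = (n + a)! xᵃ ∑ aₖ xᵏ / (k + a)!`.
-/

open Polynomial
open scoped Nat

namespace Polynomial

theorem Splits.reverse {K : Type*} [Field K] {f : K[X]} (hf : f.Splits) : f.reverse.Splits := by
  induction hf using Submonoid.closure_induction with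
  | mem p hp =>
    refine Splits.of_natDegree_le_one ((reverse_natDegree_le p).trans ?_)
    obtain ⟨a, rfl⟩ | ⟨a, rfl⟩ := hp
    · exact natDegree_C a ▸ zero_le_one
    · exact (natDegree_X_add_C a).le
  | one => simpa only [← C_1, reverse_C] using Splits.C (1 : K)
  | mul f g _ _ hf hg => simpa only [reverse_mul_of_domain] using hf.mul hg

theorem splits_of_natDegree_le_card_roots_add_one {K : Type*} [Field K] {p : K[X]}
    (h : p.natDegree ≤ Multiset.card p.roots + 1) : p.Splits := by
  obtain ⟨q, hpq, hdeg, -⟩ := p.exists_prod_multiset_X_sub_C_mul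
  rw [← hpq]
  exact (Splits.multisetProd fun f hf => by
    obtain ⟨a, -, rfl⟩ := Multiset.mem_map.mp hf
    exact Splits.X_sub_C a).mul (Splits.of_natDegree_le_one (by omega))

end Polynomial

theorem realRooted_iff_splits {p : ℝ[X]} : RealRooted p ↔ p ≠ 0 ∧ p.Splits := by
  constructor
  · intro h
    have hp : p ≠ 0 := by
      rintro rfl
      simpa using h Complex.I (by simp)
    refine ⟨hp, Splits.of_splits_map (algebraMap ℝ ℂ) (IsAlgClosed.splits _) fun z hz => ?_⟩
    rw [mem_roots (map_ne_zero hp), IsRoot, eval_map_algebraMap] at hz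
    exact ⟨z.re, Complex.ext (by simp) (by simp [h z hz])⟩
  · rintro ⟨hp, hs⟩ z hz
    obtain ⟨x, rfl⟩ := hs.mem_range_of_isRoot hp (i := algebraMap ℝ ℂ)
      (by rwa [IsRoot, eval_map_algebraMap])
    simp

namespace RealRooted

theorem ne_zero {p : ℝ[X]} (h : RealRooted p) : p ≠ 0 := (realRooted_iff_splits.mp h).1

theorem splits {p : ℝ[X]} (h : RealRooted p) : p.Splits := (realRooted_iff_splits.mp h).2

theorem card_roots {p : ℝ[X]} (h : RealRooted p) : Multiset.card p.roots = p.natDegree :=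
  splits_iff_card_roots.mp h.splits

theorem of_mul_left {p q : ℝ[X]} (h : RealRooted (p * q)) : RealRooted q := fun z hz =>
  h z (by rw [map_mul, hz, mul_zero])

theorem reverse {p : ℝ[X]} (h : RealRooted p) : RealRooted p.reverse :=
  realRooted_iff_splits.mpr ⟨by simpa [reverse_eq_zero] using h.ne_zero, h.splits.reverse⟩

end RealRooted

theorem realRooted_X_pow (n : ℕ) : RealRooted (X ^ n : ℝ[X]) :=
  realRooted_iff_splits.mpr ⟨pow_ne_zero n X_ne_zero, Splits.X_pow n⟩

theorem realRooted_of_natDegree_le_card_roots_add_one {p : ℝ[X]} (hp : p ≠ 0)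
    (h : p.natDegree ≤ Multiset.card p.roots + 1) : RealRooted p :=
  realRooted_iff_splits.mpr ⟨hp, splits_of_natDegree_le_card_roots_add_one h⟩

namespace Polynomial

theorem rootMultiplicity_sub_one_le_derivative_add_C_mul_rootMultiplicity {R : Type*}
    [CommRing R] [NoZeroDivisors R] [CharZero R] (p : R[X]) (r t : R)
    (h : derivative p + C r * p ≠ 0) :
    p.rootMultiplicity t - 1 ≤ (derivative p + C r * p).rootMultiplicity t :=
  (le_rootMultiplicity_iff h).2 <| dvd_add
    ((pow_dvd_pow _ (rootMultiplicity_sub_one_le_derivative_rootMultiplicity p t)).trans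
      (pow_rootMultiplicity_dvd _ t))
    (((pow_dvd_pow _ (Nat.sub_le _ 1)).trans (pow_rootMultiplicity_dvd p t)).mul_left _)

theorem hasDerivAt_exp_mul_eval (p : ℝ[X]) (r t : ℝ) :
    HasDerivAt (fun s => Real.exp (r * s) * p.eval s)
      (Real.exp (r * t) * (derivative p + C r * p).eval t) t :=
  (((hasDerivAt_id t).const_mul r).exp.mul (p.hasDerivAt t)).congr_deriv <| by
    simp only [eval_add, eval_mul, eval_C, id]
    ring

theorem card_roots_toFinset_le_card_roots_derivative_add_C_mul_sdiff_roots_succ (p : ℝ[X])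
    (r : ℝ) (h : derivative p + C r * p ≠ 0) :
    p.roots.toFinset.card ≤
      ((derivative p + C r * p).roots.toFinset \ p.roots.toFinset).card + 1 := by
  have hp : p ≠ 0 := by rintro rfl; simp at h
  refine Finset.card_le_sdiff_of_interleaved fun x hx y hy hxy _ => ?_
  rw [Multiset.mem_toFinset, mem_roots hp] at hx hy
  obtain ⟨z, hz, hdz⟩ := exists_deriv_eq_zero hxy
    (fun s _ => (hasDerivAt_exp_mul_eval p r s).continuousAt.continuousWithinAt)
    (by simp [hx.eq_zero, hy.eq_zero])
  rw [(hasDerivAt_exp_mul_eval p r z).deriv] at hdz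
  refine ⟨z, ?_, hz⟩
  rw [Multiset.mem_toFinset, mem_roots h]
  exact (mul_eq_zero.mp hdz).resolve_left (Real.exp_ne_zero _)

theorem card_roots_le_card_roots_derivative_add_C_mul_add_one (p : ℝ[X]) (r : ℝ)
    (h : derivative p + C r * p ≠ 0) :
    Multiset.card p.roots ≤ Multiset.card (derivative p + C r * p).roots + 1 := by
  set q := derivative p + C r * p
  calc
    Multiset.card p.roots = ∑ x ∈ p.roots.toFinset, p.roots.count x :=
      (Multiset.toFinset_sum_count_eq _).symm
    _ = ∑ x ∈ p.roots.toFinset, (p.roots.count x - 1 + 1) :=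
      (Eq.symm <| Finset.sum_congr rfl fun _ hx => tsub_add_cancel_of_le <|
        Nat.succ_le_iff.2 <| Multiset.count_pos.2 <| Multiset.mem_toFinset.1 hx)
    _ = (∑ x ∈ p.roots.toFinset, (p.rootMultiplicity x - 1)) + p.roots.toFinset.card := by
      simp only [Finset.sum_add_distrib, Finset.card_eq_sum_ones, count_roots]
    _ ≤ (∑ x ∈ p.roots.toFinset, q.rootMultiplicity x) +
          ((q.roots.toFinset \ p.roots.toFinset).card + 1) :=
      add_le_add
        (Finset.sum_le_sum fun x _ =>
          rootMultiplicity_sub_one_le_derivative_add_C_mul_rootMultiplicity p r x h)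
        (card_roots_toFinset_le_card_roots_derivative_add_C_mul_sdiff_roots_succ p r h)
    _ ≤ (∑ x ∈ p.roots.toFinset, q.roots.count x) +
          ((∑ x ∈ q.roots.toFinset \ p.roots.toFinset, q.roots.count x) + 1) := by
      simp only [← count_roots, Finset.card_eq_sum_ones]
      gcongr with x hx
      rw [Nat.succ_le_iff, Multiset.count_pos, ← Multiset.mem_toFinset]
      exact (Finset.mem_sdiff.1 hx).1
    _ = Multiset.card q.roots + 1 := by
      rw [← add_assoc, ← Finset.sum_union Finset.disjoint_sdiff,
        Finset.union_sdiff_self_eq_union, ← Multiset.toFinset_sum_count_eq, ← Finset.sum_subset Finset.subset_union_right]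
      intro x _ hx₂
      simpa only [Multiset.mem_toFinset, Multiset.count_eq_zero] using hx₂

theorem aeval_derivative_apply_eq_sum {R : Type*} [CommSemiring R] {q : R[X]} {n : ℕ}
    (hn : q.natDegree < n) (f : R[X]) :
    aeval (derivative : Module.End R R[X]) q f =
      ∑ j ∈ Finset.range n, q.coeff j • derivative^[j] f := by
  rw [aeval_eq_sum_range' hn, LinearMap.sum_apply]
  simp only [LinearMap.smul_apply, Module.End.pow_apply]

end Polynomial

namespace RealRooted

theorem derivative_add_C_mul {p : ℝ[X]} (hp : RealRooted p) (r : ℝ)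
    (h : derivative p + C r * p ≠ 0) : RealRooted (derivative p + C r * p) := by
  refine realRooted_of_natDegree_le_card_roots_add_one h ?_
  have hdeg : (derivative p + C r * p).natDegree ≤ p.natDegree :=
    natDegree_add_le_of_degree_le ((natDegree_derivative_le p).trans (Nat.sub_le _ _))
      (natDegree_C_mul_le r p)
  have hcard := card_roots_le_card_roots_derivative_add_C_mul_add_one p r h
  rw [hp.card_roots] at hcard
  omega

theorem derivative {p : ℝ[X]} (hp : RealRooted p) (hd : 0 < p.natDegree) :
    RealRooted (derivative p) := by
  simpa using hp.derivative_add_C_mul 0 (by simpa [derivative_eq_zero] using hd.ne')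

theorem mul {p q : ℝ[X]} (hp : RealRooted p) (hq : RealRooted q) : RealRooted (p * q) :=
  realRooted_iff_splits.mpr ⟨mul_ne_zero hp.ne_zero hq.ne_zero, hp.splits.mul hq.splits⟩

theorem C_mul {p : ℝ[X]} (hp : RealRooted p) {a : ℝ} (ha : a ≠ 0) : RealRooted (C a * p) :=
  realRooted_iff_splits.mpr ⟨mul_ne_zero (C_ne_zero.mpr ha) hp.ne_zero, hp.splits.C_mul a⟩

end RealRooted

theorem Polynomial.Splits.realRooted_aeval_derivative {q : ℝ[X]} (hq : q.Splits) {f : ℝ[X]}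
    (hf : RealRooted f) (h : aeval (derivative : Module.End ℝ ℝ[X]) q f ≠ 0) :
    RealRooted (aeval (derivative : Module.End ℝ ℝ[X]) q f) := by
  induction hq using Submonoid.closure_induction generalizing f with
  | mem g hg =>
    obtain ⟨a, rfl⟩ | ⟨a, rfl⟩ := hg
    · rw [aeval_C, Algebra.algebraMap_eq_smul_one, LinearMap.smul_apply, Module.End.one_apply,
        smul_eq_C_mul] at h ⊢
      exact hf.C_mul (by rintro rfl; simp at h)
    · rw [map_add, aeval_X, aeval_C, Algebra.algebraMap_eq_smul_one, LinearMap.add_apply,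
        LinearMap.smul_apply, Module.End.one_apply, smul_eq_C_mul] at h ⊢
      exact hf.derivative_add_C_mul a h
  | one => simpa using hf
  | mul g₁ g₂ _ _ ih₁ ih₂ =>
    rw [map_mul, Module.End.mul_apply] at h ⊢
    exact ih₁ (ih₂ hf fun h₂ => h (by rw [h₂, map_zero])) h

theorem coeff_applySeq (γ : ℕ → ℝ) (p : ℝ[X]) (k : ℕ) :
    (applySeq γ p).coeff k = γ k * p.coeff k := by
  simp only [applySeq, finsetSum_coeff, coeff_C_mul_X_pow, Finset.sum_ite_eq, Finset.mem_range]
  split_ifs with hk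
  · rfl
  · rw [coeff_eq_zero_of_natDegree_lt (by omega), mul_zero]

theorem applySeq_mul (γ δ : ℕ → ℝ) (p : ℝ[X]) :
    applySeq (fun k => γ k * δ k) p = applySeq γ (applySeq δ p) := by
  ext k
  simp only [coeff_applySeq, mul_assoc]

theorem applySeq_one (p : ℝ[X]) : applySeq (fun _ => 1) p = p := by
  ext k
  rw [coeff_applySeq, one_mul]

theorem applySeq_natCast_add (c : ℝ) (p : ℝ[X]) :
    applySeq (fun k => (k : ℝ) + c) p = X * derivative p + C c * p := by
  ext k
  rw [coeff_applySeq, coeff_add, coeff_C_mul]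
  rcases k with _ | k
  · simp
  · rw [coeff_X_mul, coeff_derivative]
    push_cast
    ring

theorem isMultiplierSequence_one : IsMultiplierSequence fun _ => 1 := fun p hp => by
  rwa [applySeq_one]

theorem IsMultiplierSequence.mul {γ δ : ℕ → ℝ} (hγ : IsMultiplierSequence γ)
    (hδ : IsMultiplierSequence δ) : IsMultiplierSequence fun k => γ k * δ k := fun p hp => by
  rw [applySeq_mul]
  exact hγ _ (hδ p hp)

theorem isMultiplierSequence_natCast_add {c : ℕ} (hc : 0 < c) :
    IsMultiplierSequence fun k => (k : ℝ) + c := by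
  intro p hp
  have hd : 0 < (X ^ c * p).natDegree := by
    rw [natDegree_mul (pow_ne_zero c X_ne_zero) hp.ne_zero, natDegree_X_pow]
    omega
  have hderiv : derivative (X ^ c * p) = X ^ (c - 1) * applySeq (fun k => (k : ℝ) + c) p := by
    obtain ⟨d, rfl⟩ := Nat.exists_eq_add_of_lt hc
    rw [applySeq_natCast_add, derivative_mul, derivative_X_pow]
    push_cast
    ring
  have h := ((realRooted_X_pow c).mul hp).derivative hd
  rw [hderiv] at h
  exact h.of_mul_left

theorem isMultiplierSequence_ascFactorial (m : ℕ) :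
    IsMultiplierSequence fun k => ((k + 1).ascFactorial m : ℝ) := by
  induction m with
  | zero => simpa using isMultiplierSequence_one
  | succ m ih =>
    convert (isMultiplierSequence_natCast_add m.succ_pos).mul ih using 2 with k
    rw [Nat.ascFactorial_succ]
    push_cast
    ring

theorem aeval_derivative_reverse_X_pow (p : ℝ[X]) (a : ℕ) :
    aeval (derivative : Module.End ℝ ℝ[X]) p.reverse (X ^ (p.natDegree + a)) =
      C ((p.natDegree + a)! : ℝ) * X ^ a * applySeq (fun k => ((k + a)! : ℝ)⁻¹) p := by
  set n := p.natDegree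
  rw [aeval_derivative_apply_eq_sum ((reverse_natDegree_le p).trans_lt n.lt_succ_self),
    ← Finset.sum_range_reflect, applySeq, Finset.mul_sum]
  refine Finset.sum_congr rfl fun k hk => ?_
  have hk : k ≤ n := Finset.mem_range_succ_iff.mp hk
  have hdesc : ((n + a).descFactorial (n - k) : ℝ) = (n + a)! * ((k + a)! : ℝ)⁻¹ := by
    rw [eq_mul_inv_iff_mul_eq₀ (by positivity), mul_comm]
    exact_mod_cast (show n + a - (n - k) = k + a by omega) ▸
      Nat.factorial_mul_descFactorial (show n - k ≤ n + a by omega)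
  rw [Nat.succ_sub_one, coeff_reverse, revAt_le (Nat.sub_le n k), Nat.sub_sub_self hk,
    iterate_derivative_X_pow_eq_smul, show n + a - (n - k) = k + a by omega, hdesc, smul_smul,
    smul_eq_C_mul, pow_add]
  simp only [C_mul]
  ring

theorem isMultiplierSequence_inv_factorial_add (a : ℕ) :
    IsMultiplierSequence fun k => ((k + a)! : ℝ)⁻¹ := by
  intro p hp
  have hne : applySeq (fun k => ((k + a)! : ℝ)⁻¹) p ≠ 0 := fun h => by
    simpa [coeff_applySeq, hp.ne_zero, Nat.factorial_ne_zero] using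
      congrArg (coeff · p.natDegree) h
  have h := hp.reverse.splits.realRooted_aeval_derivative (realRooted_X_pow (p.natDegree + a))
  rw [aeval_derivative_reverse_X_pow] at h
  exact (h (mul_ne_zero (by simp [Nat.factorial_ne_zero]) hne)).of_mul_left

theorem inv_shifted_factorial_is_ms (a : ℕ) (ha : 0 < a) :
    IsMultiplierSequence (fun k => 1 / (((k : ℝ) + a) * k.factorial)) := by
  convert (isMultiplierSequence_ascFactorial (a - 1)).mul
    (isMultiplierSequence_inv_factorial_add a) using 2 with k
  have hasc : (k ! : ℝ) * (k + 1).ascFactorial (a - 1) = (k + (a - 1))! := by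
    exact_mod_cast Nat.factorial_mul_ascFactorial k (a - 1)
  have hfac : ((k + a)! : ℝ) = (k + a) * (k + (a - 1))! := by
    rw [show k + a = k + (a - 1) + 1 by omega, Nat.factorial_succ]
    push_cast
    rw [Nat.cast_sub ha]
    ring
  rw [hfac, ← hasc]
  field_simp
end

section
/- Let (\gamma_k)_{k=0}^{\infty} be a multiplier sequence of non-negative real numbers. Then for every t \in [0,1], the sequence \{B_k(t)\}_{k=0}^{\infty} defined by B_k(t) = \sum_{j=0}^{k} \binom{k}{j} (1-t)^j \gamma_{k-j} t^{k-j} is a multiplier sequence. -/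
/-!
Write `β` for the deformed sequence. It is positive, so by the Pólya–Schur criterion it is a
multiplier sequence as soon as its Jensen polynomials `∑ₖ (n choose k) βₖ xᵏ` are real-rooted.
The binomial convolution defining `β` acts on homogenized Jensen polynomials by the substitution
`(x, y) ↦ (t x, y + (1 - t) x)`, so the Jensen polynomials of `β` are those of `γ` (real-rooted,
`γ` being a multiplier sequence) composed with a real Möbius map.

The Pólya–Schur criterion rests on Grace's apolarity theorem, proved by induction on the degree
using Laguerre's theorem on polar derivatives. If `p` is real-rooted and `∑ βₖ pₖ zᵏ = 0` with
`Im z > 0`, then `p` is apolar to `w ↦ ∑ₖ (n choose k) βₖ (-z)ᵏ wⁿ⁻ᵏ`, whose roots are positive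
multiples of `z`; they lie in a closed disk in the upper half-plane, which misses the roots of `p`.
-/

open Polynomial Metric Filter Topology Finset

theorem norm_multiset_sum_sub_card_smul_le {E : Type*} [SeminormedAddCommGroup E]
    {s : Multiset E} {c : E} {r : ℝ} (h : ∀ x ∈ s, ‖x - c‖ ≤ r) :
    ‖s.sum - s.card • c‖ ≤ s.card * r := by
  induction s using Multiset.induction_on with
  | empty => simp
  | cons a s ih =>
    have ha := h a (Multiset.mem_cons_self a s)
    have hs := ih fun x hx => h x (Multiset.mem_cons_of_mem hx)
    calc ‖(a ::ₘ s).sum - (a ::ₘ s).card • c‖ = ‖(a - c) + (s.sum - s.card • c)‖ := by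
          rw [Multiset.sum_cons, Multiset.card_cons, succ_nsmul]; abel_nf
      _ ≤ ‖a - c‖ + ‖s.sum - s.card • c‖ := norm_add_le _ _
      _ ≤ (a ::ₘ s).card * r := by rw [Multiset.card_cons]; push_cast; linarith

/-- Inversion maps the closed disk of radius `R` about `a`, which misses `0`, onto the closed disk
of radius `R / K` about `conj a / K`, where `K = ‖a‖² - R²`. -/
theorem norm_inv_sub_le_iff {a v : ℂ} {R : ℝ} (hR : 0 ≤ R) (ha : R < ‖a‖) (hv : v ≠ 0) :
    ‖v⁻¹ - starRingEnd ℂ a / ((‖a‖ ^ 2 - R ^ 2 : ℝ) : ℂ)‖ ≤ R / (‖a‖ ^ 2 - R ^ 2) ↔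
      ‖v - a‖ ≤ R := by
  set K : ℝ := ‖a‖ ^ 2 - R ^ 2
  have hK : 0 < K := by simp only [K]; nlinarith
  have hKC : (K : ℂ) ≠ 0 := Complex.ofReal_ne_zero.mpr hK.ne'
  have key : ‖(K : ℂ) - starRingEnd ℂ a * v‖ ^ 2 - (R * ‖v‖) ^ 2 = K * (‖v - a‖ ^ 2 - R ^ 2) := by
    simp only [K, mul_pow, Complex.sq_norm, Complex.normSq_apply, Complex.sub_re, Complex.sub_im,
      Complex.mul_re, Complex.mul_im, Complex.conj_re, Complex.conj_im, Complex.ofReal_re,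
      Complex.ofReal_im]
    ring
  have hinv : v⁻¹ - starRingEnd ℂ a / (K : ℂ) = ((K : ℂ) - starRingEnd ℂ a * v) / (K * v) := by
    field_simp
  rw [hinv, norm_div, norm_mul, Complex.norm_real, Real.norm_of_nonneg hK.le,
    div_le_div_iff₀ (by positivity) hK]
  calc _ ↔ ‖(K : ℂ) - starRingEnd ℂ a * v‖ ≤ R * ‖v‖ := by
        rw [mul_left_comm, mul_comm K, mul_le_mul_iff_of_pos_right hK]
    _ ↔ ‖(K : ℂ) - starRingEnd ℂ a * v‖ ^ 2 ≤ (R * ‖v‖) ^ 2 :=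
        (sq_le_sq₀ (norm_nonneg _) (by positivity)).symm
    _ ↔ ‖v - a‖ ^ 2 ≤ R ^ 2 := by
        rw [← sub_nonpos, key, ← sub_nonpos (a := ‖v - a‖ ^ 2)]
        exact ⟨fun h => nonpos_of_mul_nonpos_right h hK, mul_nonpos_of_nonneg_of_nonpos hK.le⟩
    _ ↔ ‖v - a‖ ≤ R := sq_le_sq₀ (norm_nonneg _) hR

theorem exists_closedBall_of_finite_of_im_pos {s : Set ℂ} (hs : s.Finite)
    (him : ∀ z ∈ s, 0 < z.im) :
    ∃ c R, s ⊆ closedBall c R ∧ ∀ x : ℝ, (x : ℂ) ∉ closedBall c R := by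
  obtain ⟨δ, hδs, hδ⟩ : ∃ δ : ℝ, (∀ z ∈ s, δ ≤ z.im) ∧ 0 < δ :=
    (((eventually_all_finite hs).2 fun z hz =>
      nhdsWithin_le_nhds (eventually_le_nhds (him z hz))).and self_mem_nhdsWithin).exists
      (f := 𝓝[>] (0 : ℝ))
  obtain ⟨M, hM⟩ := hs.isBounded.exists_norm_le
  -- the disk about `K i` of radius `K - δ / 2`; it contains `{‖z‖ ≤ M, δ ≤ z.im}`
  set K := M ^ 2 / δ + δ
  have hKδ : K * δ = M ^ 2 + δ ^ 2 := by simp only [K]; field_simp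
  have hK : δ ≤ K := by simp only [K]; linarith [div_nonneg (sq_nonneg M) hδ.le]
  have hnorm : ∀ z : ℂ, ‖z - K * Complex.I‖ ^ 2 = z.re ^ 2 + (z.im - K) ^ 2 := by
    intro z
    rw [Complex.sq_norm, Complex.normSq_apply]
    simp [sq]
  refine ⟨K * Complex.I, K - δ / 2, fun z hz => ?_, fun x hx => ?_⟩
  · rw [mem_closedBall_iff_norm, ← sq_le_sq₀ (norm_nonneg _) (by linarith), hnorm]
    have h1 := hM z hz
    have h2 : z.re ^ 2 + z.im ^ 2 ≤ M ^ 2 := by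
      simpa [sq, ← Complex.normSq_apply, ← Complex.sq_norm] using
        pow_le_pow_left₀ (norm_nonneg z) h1 2
    nlinarith [hδs z hz]
  · rw [mem_closedBall_iff_norm, ← sq_le_sq₀ (norm_nonneg _) (by linarith), hnorm] at hx
    simp only [Complex.ofReal_re, Complex.ofReal_im] at hx
    nlinarith [sq_nonneg x]

section PolarDerivative

variable {R : Type*} [CommRing R]

/-- The polar derivative of `g` with respect to `ζ`, where `n` stands for the degree of `g`. -/
noncomputable def polarDeriv (n : ℕ) (ζ : R) (g : R[X]) : R[X] :=
  C (n : R) * g + (C ζ - X) * derivative g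

theorem eval_polarDeriv (n : ℕ) (ζ : R) (g : R[X]) (w : R) :
    (polarDeriv n ζ g).eval w = n * g.eval w + (ζ - w) * (derivative g).eval w := by
  simp [polarDeriv]

theorem coeff_polarDeriv (n : ℕ) (ζ : R) (g : R[X]) (j : ℕ) :
    (polarDeriv n ζ g).coeff j = (n - j) * g.coeff j + ζ * (j + 1) * g.coeff (j + 1) := by
  rcases j with _ | j
  · simp [polarDeriv, coeff_derivative]
  · simp only [polarDeriv, coeff_add, coeff_C_mul, sub_mul, coeff_sub, coeff_X_mul,
      coeff_derivative]
    push_cast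
    ring

end PolarDerivative

/-- Laguerre's theorem. -/
theorem mem_closedBall_of_isRoot_polarDeriv {g : ℂ[X]} {n : ℕ} {c ζ w : ℂ} {R : ℝ}
    (hg : g.degree = n) (hn : n ≠ 0) (hgR : ∀ z, g.IsRoot z → z ∈ closedBall c R)
    (hζ : ζ ∉ closedBall c R) (hw : (polarDeriv n ζ g).IsRoot w) : w ∈ closedBall c R := by
  by_contra hwR
  have hgw : g.eval w ≠ 0 := fun h => hwR (hgR w h)
  have hdeg : 0 < g.degree := by rw [hg]; exact_mod_cast Nat.pos_of_ne_zero hn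
  have hR : 0 ≤ R := by
    obtain ⟨z, hz⟩ := Complex.exists_root hdeg
    exact dist_nonneg.trans (hgR z hz)
  have hcard : g.roots.card = n :=
    IsAlgClosed.card_roots_eq_natDegree.trans (natDegree_eq_of_degree_eq_some hg)
  set S := (g.roots.map fun r => 1 / (w - r)).sum
  have hS : (n : ℂ) = (w - ζ) * S := by
    have h := hw
    rw [IsRoot, eval_polarDeriv, (IsAlgClosed.splits g).eval_derivative_eq_eval_mul_sum hgw] at h
    exact mul_left_cancel₀ hgw (by linear_combination h)
  have hwζ : w - ζ ≠ 0 := by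
    rintro h
    rw [h, zero_mul, Nat.cast_eq_zero] at hS
    exact hn hS
  set a := w - c
  have ha : R < ‖a‖ := not_le.mp fun h => hwR (mem_closedBall_iff_norm.mpr h)
  set K : ℝ := ‖a‖ ^ 2 - R ^ 2
  -- inversion about `w` turns the disk into a disk containing every `1 / (w - r)`
  set center := starRingEnd ℂ a / (K : ℂ)
  have hmem : ∀ u ∈ g.roots.map fun r => 1 / (w - r), ‖u - center‖ ≤ R / K := by
    simp only [Multiset.mem_map]
    rintro _ ⟨r, hr, rfl⟩
    have hr' := mem_closedBall_iff_norm.mp (hgR r (isRoot_of_mem_roots hr))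
    have hwr : w - r ≠ 0 := sub_ne_zero.mpr fun h => hwR (h ▸ hgR r (isRoot_of_mem_roots hr))
    rw [one_div, norm_inv_sub_le_iff hR ha hwr]
    rwa [show w - r - a = -(r - c) by simp only [a]; ring, norm_neg]
  have hsum := norm_multiset_sum_sub_card_smul_le hmem
  rw [Multiset.card_map, hcard, nsmul_eq_mul] at hsum
  have hnpos : (0 : ℝ) < n := by exact_mod_cast Nat.pos_of_ne_zero hn
  have hinv : ‖(w - ζ)⁻¹ - center‖ ≤ R / K := by
    have : S - n * center = n * ((w - ζ)⁻¹ - center) := by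
      rw [hS]; field_simp
    rw [this, norm_mul, Complex.norm_natCast] at hsum
    exact le_of_mul_le_mul_left hsum hnpos
  rw [norm_inv_sub_le_iff hR ha hwζ, show w - ζ - a = c - ζ by simp only [a]; ring,
    norm_sub_rev] at hinv
  exact hζ (mem_closedBall_iff_norm.mpr hinv)

section Apolarity

variable {R : Type*} [CommRing R]

noncomputable def apolarForm (n : ℕ) (f g : R[X]) : R :=
  ∑ ij ∈ antidiagonal n,
    (-1) ^ ij.1 * ij.1.factorial * ij.2.factorial * f.coeff ij.1 * g.coeff ij.2

theorem apolarForm_X_sub_C_mul {n : ℕ} {f : R[X]} (hf : f.natDegree ≤ n) (ζ : R) (g : R[X]) :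
    apolarForm (n + 1) ((X - C ζ) * f) g = -apolarForm n f (polarDeriv (n + 1) ζ g) := by
  have hfn : f.coeff (n + 1) = 0 := coeff_eq_zero_of_natDegree_lt (Nat.lt_succ_of_le hf)
  simp only [apolarForm, sub_mul, coeff_sub, coeff_C_mul, mul_sub, sum_sub_distrib]
  rw [Nat.sum_antidiagonal_succ, Nat.sum_antidiagonal_succ']
  simp only [coeff_X_mul, mul_coeff_zero, coeff_X_zero, zero_mul, mul_zero, hfn, zero_add,
    ← sum_neg_distrib, ← sum_sub_distrib]
  refine sum_congr rfl fun ij hij => ?_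
  rw [HasAntidiagonal.mem_antidiagonal] at hij
  have hcast : ((n + 1 : ℕ) : R) - ij.2 = ij.1 + 1 := by
    rw [← hij]; push_cast; ring
  rw [coeff_polarDeriv, hcast, Nat.factorial_succ, Nat.factorial_succ]
  push_cast
  ring

end Apolarity

theorem degree_polarDeriv {g : ℂ[X]} {n : ℕ} {c ζ : ℂ} {R : ℝ} (hg : g.degree = (n + 1 : ℕ))
    (hgR : ∀ z, g.IsRoot z → z ∈ closedBall c R) (hζ : ζ ∉ closedBall c R) :
    (polarDeriv (n + 1) ζ g).degree = n := by
  have hgn : g.natDegree = n + 1 := natDegree_eq_of_degree_eq_some hg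
  refine degree_eq_of_le_of_coeff_ne_zero ?_ ?_
  · refine degree_le_of_natDegree_le (natDegree_le_iff_coeff_eq_zero.mpr fun j hj => ?_)
    have hj1 : g.coeff (j + 1) = 0 := coeff_eq_zero_of_natDegree_lt (by omega)
    rcases (Nat.succ_le_of_lt hj).eq_or_lt with rfl | hj'
    · rw [coeff_polarDeriv, hj1]; push_cast; ring
    · rw [coeff_polarDeriv, hj1, coeff_eq_zero_of_natDegree_lt (by omega)]; ring
  · -- the coefficient is `lc g * ((n + 1) ζ - ∑ roots)`, and the centroid of the roots is in
    -- the disk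
    intro h0
    have hcard : g.roots.card = n + 1 := IsAlgClosed.card_roots_eq_natDegree.trans hgn
    have hnext := (IsAlgClosed.splits g).nextCoeff_eq_neg_sum_roots_mul_leadingCoeff
    rw [nextCoeff_of_natDegree_pos (by omega), hgn, Nat.add_sub_cancel] at hnext
    have hlc : g.leadingCoeff ≠ 0 := leadingCoeff_ne_zero.mpr (ne_zero_of_degree_gt (hg ▸
      WithBot.coe_lt_coe.mpr (Nat.zero_lt_succ n) : (0 : WithBot ℕ) < g.degree))
    have hsum : g.roots.sum = (n + 1 : ℕ) • ζ := by
      rw [coeff_polarDeriv, hnext, ← hgn, ← leadingCoeff, hgn] at h0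
      apply mul_left_cancel₀ hlc
      push_cast at h0 ⊢
      linear_combination -h0
    have hball := norm_multiset_sum_sub_card_smul_le (s := g.roots) (c := c) (r := R)
      fun z hz => mem_closedBall_iff_norm.mp (hgR z (isRoot_of_mem_roots hz))
    rw [hsum, hcard, ← smul_sub, nsmul_eq_mul, norm_mul, Complex.norm_natCast] at hball
    exact hζ (mem_closedBall_iff_norm.mpr (le_of_mul_le_mul_left hball (by positivity)))

/-- Grace's apolarity theorem. Splitting off a root `ζ` of `f` replaces `g` by its polar derivative
with respect to `ζ`. -/
theorem apolarForm_ne_zero {n : ℕ} {f g : ℂ[X]} {c : ℂ} {R : ℝ} (hf : f.degree = n)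
    (hg : g.degree = n) (hgR : ∀ z, g.IsRoot z → z ∈ closedBall c R)
    (hfR : ∀ z, f.IsRoot z → z ∉ closedBall c R) : apolarForm n f g ≠ 0 := by
  induction n generalizing f g with
  | zero =>
    simpa [apolarForm] using
      ⟨coeff_ne_zero_of_eq_degree hf, coeff_ne_zero_of_eq_degree hg⟩
  | succ n ih =>
    obtain ⟨ζ, hζ⟩ := Complex.exists_root (f := f) (by rw [hf]; exact_mod_cast n.succ_pos)
    set f₁ := f /ₘ (X - C ζ)
    have hf₁ : (X - C ζ) * f₁ = f := mul_divByMonic_eq_iff_isRoot.mpr hζ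
    have hf₁deg : f₁.degree = n := by
      have hf₁0 : f₁ ≠ 0 := by
        rintro h
        rw [h, mul_zero] at hf₁
        rw [← hf₁, degree_zero] at hf
        exact WithBot.bot_ne_coe hf
      rw [degree_eq_natDegree hf₁0, natDegree_divByMonic _ (monic_X_sub_C ζ), natDegree_X_sub_C,
        natDegree_eq_of_degree_eq_some hf, Nat.add_sub_cancel]
    rw [← hf₁, apolarForm_X_sub_C_mul (natDegree_le_of_degree_le hf₁deg.le), neg_ne_zero]
    refine ih hf₁deg (degree_polarDeriv hg hgR (hfR ζ hζ))
      (fun z hz => mem_closedBall_of_isRoot_polarDeriv hg n.succ_ne_zero hgR (hfR ζ hζ) hz)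
      fun z hz => hfR z (by rw [← hf₁, IsRoot, eval_mul, hz, mul_zero])

section Jensen

variable {R : Type*}

def binomialConv [CommSemiring R] (a : ℕ → R) (s : R) (k : ℕ) : R :=
  ∑ j ∈ range (k + 1), (k.choose j : R) * s ^ j * a (k - j)

/-- The `n`-th Jensen polynomial of `a`, homogenized. -/
def jensenForm [CommSemiring R] (a : ℕ → R) (n : ℕ) (x y : R) : R :=
  ∑ k ∈ range (n + 1), (n.choose k : R) * a k * x ^ k * y ^ (n - k)

theorem binomialConv_succ [CommSemiring R] (a : ℕ → R) (s : R) (k : ℕ) :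
    binomialConv a s (k + 1) = s * binomialConv a s k + binomialConv (fun m => a (m + 1)) s k := by
  have := sum_choose_succ_mul (fun i j => s ^ i * a j) k
  simp only [← mul_assoc] at this
  rw [binomialConv, this, add_comm, binomialConv, binomialConv, mul_sum]
  congr 1
  · exact sum_congr rfl fun j _ => by ring
  · refine sum_congr rfl fun j hj => ?_
    rw [show k + 1 - j = k - j + 1 by have := mem_range.mp hj; omega]

theorem jensenForm_succ [CommSemiring R] (a : ℕ → R) (n : ℕ) (x y : R) :
    jensenForm a (n + 1) x y =
      y * jensenForm a n x y + x * jensenForm (fun k => a (k + 1)) n x y := by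
  have := sum_choose_succ_mul (fun i j => a i * x ^ i * y ^ j) n
  simp only [← mul_assoc] at this
  rw [jensenForm, this, jensenForm, jensenForm, mul_sum, mul_sum]
  congr 1
  · refine sum_congr rfl fun k hk => ?_
    rw [show n + 1 - k = n - k + 1 by have := mem_range.mp hk; omega]
    ring
  · exact sum_congr rfl fun k _ => by ring

theorem jensenForm_smul_add [CommSemiring R] (s : R) (b c : ℕ → R) (n : ℕ) (x y : R) :
    jensenForm (fun k => s * b k + c k) n x y = s * jensenForm b n x y + jensenForm c n x y := by
  simp only [jensenForm, mul_sum, ← sum_add_distrib]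
  exact sum_congr rfl fun k _ => by ring

theorem jensenForm_binomialConv [CommSemiring R] (a : ℕ → R) (s : R) (n : ℕ) (x y : R) :
    jensenForm (binomialConv a s) n x y = jensenForm a n x (y + s * x) := by
  induction n generalizing a with
  | zero => simp [jensenForm, binomialConv]
  | succ n ih =>
    have hshift : (fun k => binomialConv a s (k + 1)) =
        fun k => s * binomialConv a s k + binomialConv (fun m => a (m + 1)) s k :=
      funext (binomialConv_succ a s)
    rw [jensenForm_succ, jensenForm_succ, hshift, jensenForm_smul_add, ih, ih]
    ring

theorem jensenForm_mul_pow [CommSemiring R] (a : ℕ → R) (t : R) (n : ℕ) (x y : R) :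
    jensenForm (fun k => a k * t ^ k) n x y = jensenForm a n (t * x) y := by
  simp only [jensenForm, mul_pow]
  exact sum_congr rfl fun k _ => by ring

theorem jensenForm_zero_one [CommSemiring R] (a : ℕ → R) (n : ℕ) : jensenForm a n 0 1 = a 0 := by
  rw [jensenForm, sum_eq_single 0 (fun k _ hk => by simp [hk]) (by simp)]
  simp

theorem jensenForm_eq_pow_mul [Field R] (a : ℕ → R) (n : ℕ) (u : R) {v : R} (hv : v ≠ 0) :
    jensenForm a n u v = v ^ n * jensenForm a n (u / v) 1 := by
  simp only [jensenForm, mul_sum, one_pow, mul_one]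
  refine sum_congr rfl fun k hk => ?_
  rw [div_pow, ← pow_sub_mul_pow v (Nat.lt_succ_iff.mp (mem_range.mp hk))]
  field_simp

end Jensen

theorem RealRooted.ne_zero_s15 {p : ℝ[X]} (hp : RealRooted p) : p ≠ 0 := by
  rintro rfl
  simpa using hp Complex.I (map_zero _)

theorem realRooted_of_forall_im_pos {p : ℝ[X]} (h : ∀ z : ℂ, 0 < z.im → aeval z p ≠ 0) :
    RealRooted p := by
  intro z hz
  rcases lt_trichotomy z.im 0 with hlt | heq | hgt
  · refine absurd ?_ (h (starRingEnd ℂ z) (by simpa using hlt))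
    rw [aeval_conj, hz, map_zero]
  · exact heq
  · exact absurd hz (h z hgt)

theorem realRooted_X_add_C_pow (a : ℝ) (n : ℕ) : RealRooted ((X + C a) ^ n) := by
  intro z hz
  simp only [map_pow, map_add, aeval_X, aeval_C, Complex.coe_algebraMap] at hz
  simpa using congrArg Complex.im (eq_neg_of_add_eq_zero_left (eq_zero_of_pow_eq_zero hz))

theorem applySeq_X_pow (γ : ℕ → ℝ) (k : ℕ) : applySeq γ (X ^ k) = C (γ k) * X ^ k := by
  rw [applySeq, natDegree_X_pow, sum_eq_single k (fun j _ hj => by simp [coeff_X_pow, hj])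
    (by simp)]
  simp

theorem IsMultiplierSequence.ne_zero_s15 {γ : ℕ → ℝ} (hγ : IsMultiplierSequence γ) (k : ℕ) :
    γ k ≠ 0 := by
  intro h
  have := (hγ _ (by simpa using realRooted_X_add_C_pow 0 k)).ne_zero_s15
  rw [applySeq_X_pow, h, C_0, zero_mul] at this
  exact this rfl

theorem aeval_applySeq {A : Type*} [CommSemiring A] [Algebra ℝ A] (γ : ℕ → ℝ) (p : ℝ[X]) (x : A) :
    aeval x (applySeq γ p) =
      ∑ k ∈ range (p.natDegree + 1), algebraMap ℝ A (γ k) * algebraMap ℝ A (p.coeff k) * x ^ k := by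
  simp [applySeq, map_sum, aeval_C]

theorem aeval_applySeq_X_add_one_pow {A : Type*} [CommSemiring A] [Algebra ℝ A] (γ : ℕ → ℝ)
    (n : ℕ) (x : A) :
    aeval x (applySeq γ ((X + 1) ^ n)) = jensenForm (fun k => algebraMap ℝ A (γ k)) n x 1 := by
  have hdeg : ((X + 1 : ℝ[X]) ^ n).natDegree = n := by
    simpa using natDegree_pow_X_add_C (R := ℝ) n 1
  rw [aeval_applySeq, hdeg, jensenForm]
  refine sum_congr rfl fun k _ => ?_
  rw [coeff_X_add_one_pow, map_natCast]
  ring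

theorem aeval_applySeq_X_add_one_pow_pos {γ : ℕ → ℝ} (hγ : ∀ k, 0 < γ k) (n : ℕ) {x : ℝ}
    (hx : 0 ≤ x) : 0 < aeval x (applySeq γ ((X + 1) ^ n)) := by
  rw [aeval_applySeq_X_add_one_pow]
  refine sum_pos' (fun k _ => ?_) ⟨0, by simp, by simpa using hγ 0⟩
  have := hγ k
  simp only [Algebra.algebraMap_self, RingHom.id_apply, one_pow, mul_one]
  positivity

theorem re_neg_of_aeval_applySeq_X_add_one_pow {γ : ℕ → ℝ} (hγ : ∀ k, 0 < γ k) {n : ℕ}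
    (hJ : RealRooted (applySeq γ ((X + 1) ^ n))) {x : ℂ}
    (hx : aeval x (applySeq γ ((X + 1) ^ n)) = 0) : x = x.re ∧ x.re < 0 := by
  have hre : x = x.re := Complex.ext (by simp) (by simp [hJ x hx])
  refine ⟨hre, not_le.mp fun h => ?_⟩
  rw [hre, ← Complex.coe_algebraMap, aeval_algebraMap_apply,
    map_eq_zero_iff _ (algebraMap ℝ ℂ).injective] at hx
  exact (aeval_applySeq_X_add_one_pow_pos hγ n h).ne' hx

section HomJensenPoly

variable {R : Type*}

noncomputable def homJensenPoly [CommSemiring R] (a : ℕ → R) (n : ℕ) (u : R) : R[X] :=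
  ∑ k ∈ range (n + 1), C ((n.choose k : R) * a k * u ^ k) * X ^ (n - k)

theorem eval_homJensenPoly [CommSemiring R] (a : ℕ → R) (n : ℕ) (u w : R) :
    (homJensenPoly a n u).eval w = jensenForm a n u w := by
  simp [homJensenPoly, jensenForm, eval_finsetSum]

theorem coeff_homJensenPoly [CommSemiring R] (a : ℕ → R) (u : R) {n k : ℕ} (hk : k ≤ n) :
    (homJensenPoly a n u).coeff (n - k) = n.choose k * a k * u ^ k := by
  rw [homJensenPoly, finsetSum_coeff, sum_eq_single k]
  · rw [coeff_C_mul_X_pow, if_pos rfl]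
  · intro j hj hjk
    rw [coeff_C_mul_X_pow, if_neg (by have := mem_range.mp hj; omega)]
  · simp [Nat.lt_succ_of_le hk]

theorem degree_homJensenPoly [CommSemiring R] {a : ℕ → R} (ha : a 0 ≠ 0) (n : ℕ) (u : R) :
    (homJensenPoly a n u).degree = n := by
  refine degree_eq_of_le_of_coeff_ne_zero (degree_le_of_natDegree_le ?_) ?_
  · exact natDegree_sum_le_of_forall_le _ _ fun k _ =>
      (natDegree_C_mul_X_pow_le _ _).trans (Nat.sub_le n k)
  · have h0 := coeff_homJensenPoly a u (Nat.zero_le n)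
    simp only [Nat.sub_zero, Nat.choose_zero_right, Nat.cast_one, one_mul, pow_zero,
      mul_one] at h0
    rwa [h0]

theorem apolarForm_homJensenPoly [CommRing R] (a : ℕ → R) (n : ℕ) (f : R[X]) (z : R) :
    apolarForm n f (homJensenPoly a n (-z)) =
      n.factorial * ∑ k ∈ range (n + 1), a k * f.coeff k * z ^ k := by
  rw [apolarForm, Nat.sum_antidiagonal_eq_sum_range_succ_mk, mul_sum]
  refine sum_congr rfl fun k hk => ?_
  have hkn := Nat.lt_succ_iff.mp (mem_range.mp hk)
  have hfac : (n.choose k : R) * k.factorial * (n - k).factorial = n.factorial := by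
    rw [← Nat.cast_mul, ← Nat.cast_mul, Nat.choose_mul_factorial_mul_factorial hkn]
  have hsign : (-1 : R) ^ k * (-z) ^ k = z ^ k := by rw [← mul_pow, neg_one_mul, neg_neg]
  rw [coeff_homJensenPoly a _ hkn]
  calc _ = ((n.choose k : R) * k.factorial * (n - k).factorial) * ((-1) ^ k * (-z) ^ k) *
        (a k * f.coeff k) := by ring
    _ = _ := by rw [hfac, hsign]; ring

end HomJensenPoly

theorem im_pos_of_isRoot_homJensenPoly {β : ℕ → ℝ} (hβ : ∀ k, 0 < β k) {n : ℕ}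
    (hJ : RealRooted (applySeq β ((X + 1) ^ n))) {z w : ℂ} (hz : 0 < z.im)
    (hw : (homJensenPoly (fun k => (β k : ℂ)) n (-z)).IsRoot w) : 0 < w.im := by
  have hz0 : z ≠ 0 := fun h => by simp [h] at hz
  rcases eq_or_ne w 0 with rfl | hw0
  · rw [IsRoot, ← coeff_zero_eq_eval_zero, ← Nat.sub_self n, coeff_homJensenPoly _ _ le_rfl] at hw
    simp [(hβ n).ne', hz0] at hw
  · rw [IsRoot, eval_homJensenPoly, jensenForm_eq_pow_mul _ _ _ hw0, mul_eq_zero,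
      or_iff_right (pow_ne_zero n hw0)] at hw
    have hroot : aeval (-z / w) (applySeq β ((X + 1) ^ n)) = 0 := by
      simpa [aeval_applySeq_X_add_one_pow] using hw
    obtain ⟨hre, hneg⟩ := re_neg_of_aeval_applySeq_X_add_one_pow hβ hJ hroot
    -- `w` is a positive multiple of `z`
    have hmul : -z = (-z / w).re * w := by rw [← hre, div_mul_cancel₀ _ hw0]
    have him := congrArg Complex.im hmul
    simp only [Complex.neg_im, Complex.mul_im, Complex.ofReal_re, Complex.ofReal_im, zero_mul,
      add_zero] at him
    nlinarith

/-- The Pólya–Schur criterion. -/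
theorem isMultiplierSequence_of_realRooted_jensen {β : ℕ → ℝ} (hβ : ∀ k, 0 < β k)
    (hJ : ∀ n, RealRooted (applySeq β ((X + 1) ^ n))) : IsMultiplierSequence β := by
  intro p hp
  refine realRooted_of_forall_im_pos fun z hz hpz => ?_
  set n := p.natDegree
  set G := homJensenPoly (fun k => (β k : ℂ)) n (-z)
  have hGdeg : G.degree = n := degree_homJensenPoly (by exact_mod_cast (hβ 0).ne') n (-z)
  have hpdeg : (p.map (algebraMap ℝ ℂ)).degree = n := by
    rw [degree_map, degree_eq_natDegree hp.ne_zero_s15]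
  obtain ⟨c, R, hGR, hℝ⟩ := exists_closedBall_of_finite_of_im_pos
    (finite_setOfPred_isRoot (ne_zero_of_coe_le_degree hGdeg.ge))
    fun w hw => im_pos_of_isRoot_homJensenPoly hβ (hJ n) hz hw
  refine apolarForm_ne_zero hpdeg hGdeg (fun w hw => hGR hw) (fun w hw hwR => ?_) ?_
  · rw [IsRoot, eval_map_algebraMap] at hw
    exact hℝ w.re (by rwa [show (w.re : ℂ) = w from Complex.ext (by simp) (by simp [hp w hw])])
  · rw [apolarForm_homJensenPoly, ← mul_zero (n.factorial : ℂ), ← hpz, aeval_applySeq]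
    simp [n]

theorem binomialConv_pos {γ : ℕ → ℝ} (hγ : ∀ k, 0 < γ k) {s t : ℝ} (hs : 0 ≤ s) (ht : 0 ≤ t)
    (hst : 0 < s + t) (k : ℕ) : 0 < binomialConv (fun m => γ m * t ^ m) s k := by
  refine sum_pos' (fun j _ => by have := hγ (k - j); positivity) ?_
  rcases ht.eq_or_lt with rfl | ht'
  · exact ⟨k, by simp, by simpa using mul_pos (pow_pos (by linarith) k) (hγ 0)⟩
  · exact ⟨0, by simp, by simpa using mul_pos (hγ k) (pow_pos ht' k)⟩

/-- The Jensen polynomials of the deformed sequence are those of `γ` composed with the Möbius map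
`x ↦ t x / (1 + s x)`, which sends non-real points to non-real points. -/
theorem realRooted_applySeq_binomialConv {γ : ℕ → ℝ} (hγ0 : γ 0 ≠ 0) {n : ℕ}
    (hJ : RealRooted (applySeq γ ((X + 1) ^ n))) (s t : ℝ) :
    RealRooted (applySeq (binomialConv (fun m => γ m * t ^ m) s) ((X + 1) ^ n)) := by
  intro x hx
  have hcast : (fun k => algebraMap ℝ ℂ (binomialConv (fun m => γ m * t ^ m) s k)) =
      binomialConv (fun m => (γ m : ℂ) * (t : ℂ) ^ m) (s : ℂ) := by
    funext k
    simp [binomialConv]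
  rw [aeval_applySeq_X_add_one_pow, hcast, jensenForm_binomialConv, jensenForm_mul_pow] at hx
  rcases eq_or_ne (1 + (s : ℂ) * x) 0 with hv | hv
  · have him := congrArg Complex.im hv
    have hs : s ≠ 0 := by rintro rfl; simp at hv
    simpa [hs] using him
  rw [jensenForm_eq_pow_mul _ _ _ hv, mul_eq_zero, or_iff_right (pow_ne_zero n hv)] at hx
  set r := t * x / (1 + s * x)
  have hr : aeval r (applySeq γ ((X + 1) ^ n)) = 0 := by
    simpa [aeval_applySeq_X_add_one_pow] using hx
  have hr0 : r ≠ 0 := by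
    intro h
    rw [h, aeval_applySeq_X_add_one_pow, jensenForm_zero_one] at hr
    exact hγ0 (by simpa using hr)
  have hrre : r = r.re := Complex.ext (by simp) (by simp [hJ r hr])
  have hkey : x * ((t - r.re * s : ℝ) : ℂ) = r.re := by
    have h1 : r * (1 + s * x) = t * x := div_mul_cancel₀ _ hv
    push_cast
    rw [← hrre]
    linear_combination -h1
  have hden : t - r.re * s ≠ 0 := by
    intro h
    rw [h, Complex.ofReal_zero, mul_zero, eq_comm, ← hrre] at hkey
    exact hr0 hkey
  rw [eq_div_of_mul_eq (Complex.ofReal_ne_zero.mpr hden) hkey, ← Complex.ofReal_div,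
    Complex.ofReal_im]

theorem deformed_sequence_is_ms (γ : ℕ → ℝ) (hγ0 : ∀ k, 0 ≤ γ k)
    (hγ : IsMultiplierSequence γ) (t : ℝ) (ht : t ∈ Set.Icc (0 : ℝ) 1) :
    IsMultiplierSequence (fun k => ∑ j ∈ Finset.range (k + 1),
      (k.choose j : ℝ) * (1 - t) ^ j * γ (k - j) * t ^ (k - j)) := by
  have hγpos : ∀ k, 0 < γ k := fun k => (hγ0 k).lt_of_ne (hγ.ne_zero_s15 k).symm
  have hB : (fun k => ∑ j ∈ Finset.range (k + 1),
      (k.choose j : ℝ) * (1 - t) ^ j * γ (k - j) * t ^ (k - j)) =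
      binomialConv (fun m => γ m * t ^ m) (1 - t) := by
    funext k
    simp only [binomialConv, mul_assoc]
  rw [hB]
  exact isMultiplierSequence_of_realRooted_jensen
    (binomialConv_pos hγpos (sub_nonneg.mpr ht.2) ht.1 (by linarith))
    fun n => realRooted_applySeq_binomialConv (hγpos 0).ne'
      (hγ _ (by simpa using realRooted_X_add_C_pow 1 n)) _ _
end
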